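/- Take r = 1/4 (so x = √15/8, y = 1/8) and let Λ be the subgroup of ℤ² generated by (4, −2) and (1, 3), which has index 14 in ℤ². Then the separation of the induced 14-colouring of the tiles T(i, j) equals √19 / 2 (i.e. separation squared equals 19/4), and this value is attained. -/

import Mathlib

noncomputable section

/-- The Euclidean plane ℝ². -/
abbrev Plane := EuclideanSpace ℝ (Fin 2)

/-- The point (a, b) of the Euclidean plane. -/
def pt (a b : ℝ) : Plane := WithLp.toLp 2 ![a, b]

/-- The semi-regular hexagon K(r): with y = r/2 and x = √(1 − r²)/2, the closed convex
hull of the six points (0, 1/2), (x, y), (x, −y), (0, −1/2), (−x, −y), (−x, y). -/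
def hexK (r : ℝ) : Set Plane :=
  convexHull ℝ
    {pt 0 (1 / 2), pt (Real.sqrt (1 - r ^ 2) / 2) (r / 2),
      pt (Real.sqrt (1 - r ^ 2) / 2) (-(r / 2)), pt 0 (-(1 / 2)),
      pt (-(Real.sqrt (1 - r ^ 2) / 2)) (-(r / 2)),
      pt (-(Real.sqrt (1 - r ^ 2) / 2)) (r / 2)}

/-- The center c(i, j) = ((2i + j)·x, j·(y + 1/2)) of the tile with index (i, j). -/
def center (r : ℝ) (i j : ℤ) : Plane :=
  pt ((2 * (i : ℝ) + (j : ℝ)) * (Real.sqrt (1 - r ^ 2) / 2)) ((j : ℝ) * (r / 2 + 1 / 2))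

/-- The tile T(i, j) = c(i, j) + K(r). -/
def tile (r : ℝ) (i j : ℤ) : Set Plane :=
  (fun p => center r i j + p) '' hexK r

/-- The set of distances realized by points in two distinct same-coloured tiles,
for the colouring of the tiles T(i, j) by the cosets of a subgroup Λ ≤ ℤ²:
tiles T(i, j) and T(i', j') get the same colour iff (i − i', j − j') ∈ Λ.
The separation of the colouring is the infimum of this set. -/
def sameColourDists (r : ℝ) (Λ : AddSubgroup (ℤ × ℤ)) : Set ℝ :=
  {d : ℝ | ∃ (i j i' j' : ℤ) (p q : Plane),
    (i, j) ≠ (i', j') ∧ (i - i', j - j') ∈ Λ ∧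
    p ∈ tile r i j ∧ q ∈ tile r i' j' ∧ d = dist p q}


/-!
Two tiles of the same colour differ by the translation `center (1/4) (4a + b) (-2a + 3b)` with
`(a, b) ≠ 0`, whose squared length is `5/8 · (16a² + 15ab + 15b²)`. Unless `(a, b)` is one of
`±(1, 0), ±(0, 1), ±(1, -1)` this is at least `85/8`, and since each tile lies in a disc of
radius `1/2` the tiles are then more than `√19/2` apart. For the six short translations a linear
functional of norm `√19` whose values on the two tiles are `19/2` apart separates them; it
points along a vertex-to-vertex segment of length `√19/2` between the tiles, which for
`(a, b) = (0, 1)` shows that the bound is attained.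
-/

open scoped RealInnerProductSpace

section ConvexGeometry

variable {E : Type*} [NormedAddCommGroup E] [InnerProductSpace ℝ E]

theorem abs_inner_le_of_mem_convexHull {S : Set E} {u z : E} {h : ℝ}
    (hS : ∀ v ∈ S, |⟪u, v⟫| ≤ h) (hz : z ∈ convexHull ℝ S) : |⟪u, z⟫| ≤ h :=
  abs_le.mpr <| convexHull_min (fun v hv => abs_le.mp (hS v hv))
    ((convex_Icc (-h) h).linear_preimage (innerₛₗ ℝ u)) hz

theorem abs_inner_sub_sub_le_norm_mul_dist_add_add {u c c' p q : E} {h : ℝ}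
    (hp : |⟪u, p⟫| ≤ h) (hq : |⟪u, q⟫| ≤ h) :
    |⟪u, c - c'⟫| - 2 * h ≤ ‖u‖ * dist (c + p) (c' + q) := by
  have hsplit : c - c' = ((c + p) - (c' + q)) - p + q := by abel
  have hd : |⟪u, (c + p) - (c' + q)⟫| ≤ ‖u‖ * dist (c + p) (c' + q) :=
    dist_eq_norm (c + p) (c' + q) ▸ abs_real_inner_le_norm _ _
  rw [hsplit, inner_add_right, inner_sub_right]
  linarith [abs_add_le (⟪u, (c + p) - (c' + q)⟫ - ⟪u, p⟫) ⟪u, q⟫,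
    abs_sub (⟪u, (c + p) - (c' + q)⟫) ⟪u, p⟫]

end ConvexGeometry

theorem norm_sub_sub_norm_sub_norm_le_dist_add_add {E : Type*} [SeminormedAddCommGroup E]
    (c c' p q : E) : ‖c - c'‖ - ‖p‖ - ‖q‖ ≤ dist (c + p) (c' + q) := by
  have := dist_sub_sub_le (c + p) p (c' + q) q
  have := dist_le_norm_add_norm p q
  simp only [add_sub_cancel_right, dist_eq_norm] at *
  linarith

theorem inner_pt_pt (a b c d : ℝ) : ⟪pt a b, pt c d⟫ = a * c + b * d := by
  simp [pt, PiLp.inner_apply, Fin.sum_univ_two]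
  ring

theorem norm_pt_sq (a b : ℝ) : ‖pt a b‖ ^ 2 = a ^ 2 + b ^ 2 := by
  rw [← real_inner_self_eq_norm_sq, inner_pt_pt]
  ring

theorem pt_add_pt (a b c d : ℝ) : pt a b + pt c d = pt (a + c) (b + d) := by
  ext k; fin_cases k <;> simp [pt]

theorem pt_sub_pt (a b c d : ℝ) : pt a b - pt c d = pt (a - c) (b - d) := by
  ext k; fin_cases k <;> simp [pt]

theorem center_sub_center (r : ℝ) (i j i' j' : ℤ) :
    center r i j - center r i' j' = center r (i - i') (j - j') := by
  simp only [center, pt_sub_pt]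
  push_cast
  ring_nf

theorem hexK_subset_closedBall {r : ℝ} (hr : r ^ 2 ≤ 1) :
    hexK r ⊆ Metric.closedBall 0 (1 / 2) := by
  refine convexHull_min ?_ (convex_closedBall 0 _)
  have hx : Real.sqrt (1 - r ^ 2) ^ 2 = 1 - r ^ 2 := Real.sq_sqrt (by linarith)
  have hvertex :
      ∀ a b : ℝ, a ^ 2 + b ^ 2 = 1 / 4 → pt a b ∈ Metric.closedBall (0 : Plane) (1 / 2) :=
    fun a b hab => mem_closedBall_zero_iff.mpr <| (sq_le_sq₀ (norm_nonneg _) (by norm_num)).mp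
      (by rw [norm_pt_sq, hab]; norm_num)
  simp only [Set.insert_subset_iff, Set.singleton_subset_iff]
  refine ⟨?_, ?_, ?_, ?_, ?_, ?_⟩ <;> apply hvertex <;> nlinarith

theorem abs_inner_le_of_mem_hexK (r u₁ u₂ : ℝ) {z : Plane} (hz : z ∈ hexK r) :
    |⟪pt u₁ u₂, z⟫| ≤ max (|u₂| / 2) (Real.sqrt (1 - r ^ 2) / 2 * |u₁| + |r| / 2 * |u₂|) := by
  refine abs_inner_le_of_mem_convexHull ?_ hz
  have hx : 0 ≤ Real.sqrt (1 - r ^ 2) / 2 := by positivity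
  have hside : ∀ s t : ℝ, |s| = Real.sqrt (1 - r ^ 2) / 2 → |t| = |r| / 2 →
      |u₁ * s + u₂ * t| ≤ Real.sqrt (1 - r ^ 2) / 2 * |u₁| + |r| / 2 * |u₂| := by
    intro s t hs ht
    calc |u₁ * s + u₂ * t| ≤ |u₁| * |s| + |u₂| * |t| := by
          simpa only [abs_mul] using abs_add_le (u₁ * s) (u₂ * t)
      _ = _ := by rw [hs, ht]; ring
  simp only [Set.mem_insert_iff, Set.mem_singleton_iff]
  rintro v (rfl | rfl | rfl | rfl | rfl | rfl) <;> rw [inner_pt_pt]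
  all_goals first
    | (apply le_max_of_le_left; simp [abs_mul, div_eq_mul_inv]; done)
    | exact le_max_of_le_right (hside _ _ (by simp [abs_of_nonneg hx]) (by simp [abs_div]))

theorem sqrt_one_sub_quarter_sq : Real.sqrt (1 - (1 / 4 : ℝ) ^ 2) = Real.sqrt 15 / 4 := by
  rw [show (1 - (1 / 4 : ℝ) ^ 2) = 15 / 4 ^ 2 by norm_num, Real.sqrt_div' _ (by norm_num),
    Real.sqrt_sq (by norm_num)]

theorem inner_pt_center_quarter (α β : ℝ) (m n : ℤ) :
    ⟪pt (α * Real.sqrt 15) β, center (1 / 4) m n⟫ = (15 * α * (2 * m + n) + 5 * β * n) / 8 := by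
  have h15 : Real.sqrt 15 ^ 2 = 15 := Real.sq_sqrt (by norm_num)
  rw [center, inner_pt_pt, sqrt_one_sub_quarter_sq]
  linear_combination α * (2 * m + n) / 8 * h15

theorem norm_center_quarter_sq (m n : ℤ) :
    ‖center (1 / 4) m n‖ ^ 2 = (15 * (2 * m + n) ^ 2 + 25 * n ^ 2) / 64 := by
  have h15 : Real.sqrt 15 ^ 2 = 15 := Real.sq_sqrt (by norm_num)
  rw [center, norm_pt_sq, sqrt_one_sub_quarter_sq]
  linear_combination (2 * m + n : ℝ) ^ 2 / 64 * h15

theorem abs_inner_le_of_mem_hexK_quarter (α β : ℝ) {z : Plane} (hz : z ∈ hexK (1 / 4)) :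
    |⟪pt (α * Real.sqrt 15) β, z⟫| ≤ max (|β| / 2) ((15 * |α| + |β|) / 8) := by
  have h15 : Real.sqrt 15 * Real.sqrt 15 = 15 := Real.mul_self_sqrt (by norm_num)
  convert abs_inner_le_of_mem_hexK (1 / 4) _ β hz using 2
  rw [sqrt_one_sub_quarter_sq, abs_mul, abs_of_nonneg (Real.sqrt_nonneg 15)]
  norm_num
  linear_combination -|α| / 8 * h15

theorem eq_of_quadratic_form_le {a b : ℤ} (h : 16 * a ^ 2 + 15 * a * b + 15 * b ^ 2 ≤ 16) :
    (a, b) = 0 ∨ (a, b) = (1, 0) ∨ (a, b) = (-1, 0) ∨ (a, b) = (0, 1) ∨ (a, b) = (0, -1) ∨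
      (a, b) = (1, -1) ∨ (a, b) = (-1, 1) := by
  have ha : a ^ 2 ≤ 1 := by nlinarith [sq_nonneg (15 * a + 30 * b)]
  have hb : b ^ 2 ≤ 1 := by nlinarith [sq_nonneg (32 * a + 15 * b)]
  have ha₀ : -1 ≤ a := by nlinarith
  have ha₁ : a ≤ 1 := by nlinarith
  have hb₀ : -1 ≤ b := by nlinarith
  have hb₁ : b ≤ 1 := by nlinarith
  interval_cases a <;> interval_cases b <;> simp_all

section QuarterHexagon

variable {c c' p q : Plane}

theorem sqrt19_div_two_le_dist_of_functional (hp : p ∈ hexK (1 / 4)) (hq : q ∈ hexK (1 / 4))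
    {α β : ℝ} (hαβ : 15 * α ^ 2 + β ^ 2 = 19)
    (hsep : 19 / 2 + 2 * max (|β| / 2) ((15 * |α| + |β|) / 8) ≤
      |⟪pt (α * Real.sqrt 15) β, c - c'⟫|) :
    Real.sqrt 19 / 2 ≤ dist (c + p) (c' + q) := by
  have hnorm : ‖pt (α * Real.sqrt 15) β‖ = Real.sqrt 19 := by
    rw [← Real.sqrt_sq (norm_nonneg _), norm_pt_sq, mul_pow, Real.sq_sqrt (by norm_num), ← hαβ]
    ring_nf
  have h19 : Real.sqrt 19 * Real.sqrt 19 = 19 := Real.mul_self_sqrt (by norm_num)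
  have key := abs_inner_sub_sub_le_norm_mul_dist_add_add (c := c) (c' := c')
    (abs_inner_le_of_mem_hexK_quarter α β hp) (abs_inner_le_of_mem_hexK_quarter α β hq)
  rw [hnorm] at key
  nlinarith [Real.sqrt_nonneg 19, dist_nonneg (x := c + p) (y := c' + q)]

theorem sqrt19_div_two_le_dist_of_norm (hp : p ∈ hexK (1 / 4)) (hq : q ∈ hexK (1 / 4))
    (hfar : 85 / 8 ≤ ‖c - c'‖ ^ 2) :
    Real.sqrt 19 / 2 ≤ dist (c + p) (c' + q) := by
  have hball := hexK_subset_closedBall (r := 1 / 4) (by norm_num)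
  have hp' := mem_closedBall_zero_iff.mp (hball hp)
  have hq' := mem_closedBall_zero_iff.mp (hball hq)
  have hsqrt19 : Real.sqrt 19 < 9 / 2 := by
    rw [Real.sqrt_lt' (by norm_num)]; norm_num
  have hcc : 13 / 4 ≤ ‖c - c'‖ := by nlinarith [norm_nonneg (c - c')]
  linarith [norm_sub_sub_norm_sub_norm_le_dist_add_add c c' p q]

end QuarterHexagon

theorem sqrt19_div_two_le_dist {a b : ℤ} (hab : (a, b) ≠ 0) {c c' p q : Plane}
    (hc : c - c' = center (1 / 4) (4 * a + b) (-2 * a + 3 * b))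
    (hp : p ∈ hexK (1 / 4)) (hq : q ∈ hexK (1 / 4)) :
    Real.sqrt 19 / 2 ≤ dist (c + p) (c' + q) := by
  by_cases hQ : 16 * a ^ 2 + 15 * a * b + 15 * b ^ 2 ≤ 16
  · have hsep := fun α β => sqrt19_div_two_le_dist_of_functional (c := c) (c' := c') hp hq
      (α := α) (β := β)
    simp only [hc, inner_pt_center_quarter] at hsep
    -- `(α √15, β)` is the direction of the shortest segment between the two tiles.
    rcases eq_of_quadratic_form_le hQ with h | h | h | h | h | h | h <;>
      obtain ⟨rfl, rfl⟩ := Prod.ext_iff.mp h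
    · exact absurd h hab
    · exact hsep 1 (-2) (by norm_num) (by norm_num [abs_le])
    · exact hsep 1 (-2) (by norm_num) (by norm_num [abs_le])
    · exact hsep (3 / 4) (13 / 4) (by norm_num) (by norm_num [abs_le])
    · exact hsep (3 / 4) (13 / 4) (by norm_num) (by norm_num [abs_le])
    · exact hsep (1 / 4) (-17 / 4) (by norm_num) (by norm_num [abs_le])
    · exact hsep (1 / 4) (-17 / 4) (by norm_num) (by norm_num [abs_le])
  · refine sqrt19_div_two_le_dist_of_norm hp hq ?_
    have hQ' : (17 : ℝ) ≤ 16 * a ^ 2 + 15 * a * b + 15 * b ^ 2 := by exact_mod_cast not_le.mp hQ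
    rw [hc, norm_center_quarter_sq]
    push_cast
    nlinarith

/-- Both generators lie in the kernel: `11 * 4 - 2 = 42` and `11 * 1 + 3 = 14`. -/
def colourHom : ℤ × ℤ →+ ZMod 14 where
  toFun v := ((11 * v.1 + v.2 : ℤ) : ZMod 14)
  map_zero' := by simp
  map_add' v w := by simp only [Prod.fst_add, Prod.snd_add]; push_cast; ring

theorem closure_eq_ker_colourHom :
    AddSubgroup.closure {((4 : ℤ), (-2 : ℤ)), ((1 : ℤ), (3 : ℤ))} = colourHom.ker := by
  apply le_antisymm
  · rw [AddSubgroup.closure_le]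
    rintro v (rfl | rfl) <;> simp [colourHom] <;> decide
  · rintro ⟨i, j⟩ hv
    obtain ⟨k, hk⟩ := (ZMod.intCast_zmod_eq_zero_iff_dvd _ 14).mp (AddMonoidHom.mem_ker.mp hv)
    refine AddSubgroup.mem_closure_pair.mpr ⟨i - k, 4 * k - 3 * i, ?_⟩
    ext <;> simp at hk ⊢ <;> linarith

theorem index_closure_eq_fourteen :
    (AddSubgroup.closure {((4 : ℤ), (-2 : ℤ)), ((1 : ℤ), (3 : ℤ))}).index = 14 := by
  have hsurj : Function.Surjective colourHom := fun x =>
    ⟨(0, x.val), by simp [colourHom]⟩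
  rw [closure_eq_ker_colourHom, AddSubgroup.index_ker, AddMonoidHom.range_eq_top.mpr hsurj,
    AddSubgroup.card_top, Nat.card_zmod]

theorem dist_opposite_vertices_center_one_three :
    dist (center (1 / 4) 1 3 + pt (-(Real.sqrt (1 - (1 / 4 : ℝ) ^ 2) / 2)) (-(1 / 4 / 2)))
      (center (1 / 4) 0 0 + pt (Real.sqrt (1 - (1 / 4 : ℝ) ^ 2) / 2) (1 / 4 / 2)) =
      Real.sqrt 19 / 2 := by
  have h15 : Real.sqrt 15 ^ 2 = 15 := Real.sq_sqrt (by norm_num)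
  have hsq : ‖(center (1 / 4) 1 3 + pt (-(Real.sqrt (1 - (1 / 4 : ℝ) ^ 2) / 2)) (-(1 / 4 / 2))) -
      (center (1 / 4) 0 0 + pt (Real.sqrt (1 - (1 / 4 : ℝ) ^ 2) / 2) (1 / 4 / 2))‖ ^ 2 =
      19 / 4 := by
    simp only [center, pt_add_pt, pt_sub_pt, norm_pt_sq, sqrt_one_sub_quarter_sq]
    push_cast
    linear_combination 9 / 64 * h15
  rw [dist_eq_norm, ← Real.sqrt_sq (norm_nonneg _), hsq, Real.sqrt_div' _ (by norm_num),
    show (4 : ℝ) = 2 ^ 2 by norm_num, Real.sqrt_sq (by norm_num)]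

/-- with r = 1/4 and Λ = ⟨(4, -2), (1, 3)⟩ ≤ ℤ² of index 14,
the separation of the induced 14-colouring of the tiles T(i, j) equals the stated
value, and this value is attained. -/
theorem statement11 :
    (AddSubgroup.closure {(((4) : ℤ), ((-2) : ℤ)), (((1) : ℤ), ((3) : ℤ))}).index = 14 ∧
    IsLeast
      (sameColourDists (1 / 4)
        (AddSubgroup.closure {(((4) : ℤ), ((-2) : ℤ)), (((1) : ℤ), ((3) : ℤ))}))
      (Real.sqrt 19 / 2) := by
  refine ⟨index_closure_eq_fourteen,
    ⟨1, 3, 0, 0, _, _, by simp, ?_, ⟨_, subset_convexHull ℝ _ (by simp), rfl⟩,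
      ⟨_, subset_convexHull ℝ _ (by simp), rfl⟩, dist_opposite_vertices_center_one_three.symm⟩, ?_⟩
  · simpa using (AddSubgroup.subset_closure (by simp) :
      ((1 : ℤ), (3 : ℤ)) ∈ AddSubgroup.closure {((4 : ℤ), (-2 : ℤ)), ((1 : ℤ), (3 : ℤ))})
  rintro d ⟨i, j, i', j', _, _, hne, hΛ, ⟨p, hp, rfl⟩, ⟨q, hq, rfl⟩, rfl⟩
  obtain ⟨a, b, hab⟩ := AddSubgroup.mem_closure_pair.mp hΛ
  simp only [Prod.ext_iff, Prod.smul_mk, smul_eq_mul, Prod.mk_add_mk] at hab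
  refine sqrt19_div_two_le_dist (a := a) (b := b) ?_ ?_ hp hq
  · rintro ⟨⟩
    exact hne (Prod.ext (by omega) (by omega))
  · rw [center_sub_center]
    congr 1 <;> omega
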